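/- arXiv:2507.22314 — 2 statements merged into one kernel-verified Lean document; each statement's English description precedes it below -/
import Mathlib

section
/- Let k be a perfect field of characteristic p > 0 and let g ∈ k[x₁, …, xₙ] be a nonzero polynomial of minimal total degree within a nonzero ideal J that is closed under p-th roots (gᵖ ∈ J ⟹ g ∈ J) and under partial derivatives. Then g is a nonzero constant. -/
/-!
A partial derivative of `g` lies in `J` and has smaller degree, so by minimality every
`∂g/∂xᵢ` vanishes. In characteristic `p` this forces every exponent of `g` to be divisible
by `p`, i.e. `g = expand p f`, and over a perfect field `expand p f` is the `p`-th power of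
`f` with Frobenius inverted on its coefficients. Hence `g = hᵖ` with `h ∈ J`, and
`p · deg h ≤ deg h` forces `deg h = 0`.
-/

open MvPolynomial

namespace MvPolynomial

variable {σ R : Type*} [CommSemiring R]

theorem totalDegree_pderiv_lt {i : σ} {f : MvPolynomial σ R} (h : pderiv i f ≠ 0) :
    (pderiv i f).totalDegree < f.totalDegree := by
  obtain ⟨m, hm, hdeg⟩ := Finset.exists_mem_eq_sup _ (support_nonempty.2 h)
    fun m : σ →₀ ℕ => m.sum fun _ e => e
  have hmi : m + Finsupp.single i 1 ∈ f.support := by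
    rw [mem_support_iff, coeff_pderiv] at hm
    exact mem_support_iff.2 (left_ne_zero_of_mul hm)
  have hle := le_totalDegree hmi
  rw [Finsupp.sum_add_index' (fun _ => rfl) (fun _ _ _ => rfl), Finsupp.sum_single_index rfl]
    at hle
  rw [totalDegree, hdeg]
  omega

theorem dvd_of_pderiv_eq_zero_of_mem_support [NoZeroDivisors R] (p : ℕ) [CharP R p]
    {i : σ} {f : MvPolynomial σ R} (hf : pderiv i f = 0) {m : σ →₀ ℕ} (hm : m ∈ f.support) :
    p ∣ m i := by
  rcases Nat.eq_zero_or_pos (m i) with hmi | hmi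
  · simp [hmi]
  have hsplit : m - Finsupp.single i 1 + Finsupp.single i 1 = m :=
    tsub_add_cancel_of_le (Finsupp.single_le_iff.2 hmi)
  have hcoeff := coeff_pderiv (i := i) f (m - Finsupp.single i 1)
  rw [hf, coeff_zero, hsplit, eq_comm] at hcoeff
  have hcast : ((m i : ℕ) : R) = 0 := by
    have hpred : (m - Finsupp.single i 1 : σ →₀ ℕ) i + 1 = m i := by
      simp only [Finsupp.coe_tsub, Pi.sub_apply, Finsupp.single_eq_same]; omega
    rw [← hpred, Nat.cast_succ]
    exact (mul_eq_zero.1 hcoeff).resolve_left (mem_support_iff.1 hm)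
  exact (CharP.cast_eq_zero_iff R p _).1 hcast

theorem exists_expand_eq_of_forall_dvd {p : ℕ} {f : MvPolynomial σ R}
    (hf : ∀ m ∈ f.support, ∀ i, p ∣ m i) : ∃ f', expand p f' = f := by
  refine ⟨∑ m ∈ f.support, monomial (m.mapRange (· / p) (Nat.zero_div p)) (coeff m f), ?_⟩
  conv_rhs => rw [f.as_sum]
  rw [map_sum]
  refine Finset.sum_congr rfl fun m hm => ?_
  have hm' : p • m.mapRange (· / p) (Nat.zero_div p) = m := by
    ext i
    simp [Nat.mul_div_cancel' (hf m hm i)]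
  rw [expand_monomial, hm']

theorem exists_pow_eq_of_expand {p : ℕ} [ExpChar R p] [PerfectRing R p] (f : MvPolynomial σ R) :
    ∃ h, h ^ p = expand p f :=
  ⟨map (frobeniusEquiv R p).symm f, by
    rw [← map_frobenius_expand, map_expand, map_map, frobenius_comp_frobeniusEquiv_symm, map_id]⟩

theorem totalDegree_pow_of_isDomain [IsDomain R] (f : MvPolynomial σ R) (n : ℕ) :
    (f ^ n).totalDegree = n * f.totalDegree := by
  rcases eq_or_ne f 0 with rfl | hf
  · cases n <;> simp
  induction n with
  | zero => simp
  | succ n ih => rw [pow_succ, totalDegree_mul_of_isDomain (pow_ne_zero n hf) hf, ih]; ring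

end MvPolynomial

theorem minimal_degree_elt_is_constant_general
    {k : Type} [Field k] (p : ℕ) (hp : p.Prime) [CharP k p] [PerfectField k]
    (n : ℕ) (J : Ideal (MvPolynomial (Fin n) k))
    (hroot : ∀ h : MvPolynomial (Fin n) k, h ^ p ∈ J → h ∈ J)
    (hderiv : ∀ h ∈ J, ∀ i : Fin n, pderiv i h ∈ J)
    (g : MvPolynomial (Fin n) k) (hgJ : g ∈ J) (hg0 : g ≠ 0)
    (hgmin : ∀ f ∈ J, f ≠ 0 → g.totalDegree ≤ f.totalDegree) :
    ∃ c : k, c ≠ 0 ∧ g = C c := by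
  have : Fact p.Prime := ⟨hp⟩
  have hpderiv (i : Fin n) : pderiv i g = 0 := by
    by_contra hne
    exact (totalDegree_pderiv_lt hne).not_ge (hgmin _ (hderiv g hgJ i) hne)
  obtain ⟨f, hf⟩ := exists_expand_eq_of_forall_dvd fun m hm i =>
    dvd_of_pderiv_eq_zero_of_mem_support p (hpderiv i) hm
  obtain ⟨h, rfl⟩ : ∃ h, h ^ p = g := hf ▸ exists_pow_eq_of_expand f
  have hh0 : h ≠ 0 := ne_zero_pow hp.ne_zero hg0
  have hdeg : p * h.totalDegree ≤ h.totalDegree := by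
    simpa only [totalDegree_pow_of_isDomain] using hgmin h (hroot h hgJ) hh0
  obtain ⟨c, rfl⟩ : ∃ c, h = C c :=
    ⟨_, totalDegree_eq_zero_iff_eq_C.1 (by nlinarith [hp.two_le])⟩
  exact ⟨c ^ p, pow_ne_zero _ (by rintro rfl; exact hh0 C_0), (map_pow C c p).symm⟩

/-- Let `k` be a perfect field of characteristic `p > 0`, `J` a nonzero ideal of
`k[x₁,…,xₙ]` closed under `p`-th roots and under partial derivatives, and `g ∈ J` a
nonzero element of minimal total degree among nonzero elements of `J`.  Then `g` is a
nonzero constant. -/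
theorem minimal_degree_elt_is_constant
    {k : Type} [Field k] (p : ℕ) (hp : p.Prime) [CharP k p] [PerfectField k]
    (n : ℕ) (J : Ideal (MvPolynomial (Fin n) k))
    (hJ0 : J ≠ ⊥)
    (hroot : ∀ h : MvPolynomial (Fin n) k, h ^ p ∈ J → h ∈ J)
    (hderiv : ∀ h ∈ J, ∀ i : Fin n, pderiv i h ∈ J)
    (g : MvPolynomial (Fin n) k) (hgJ : g ∈ J) (hg0 : g ≠ 0)
    (hgmin : ∀ f ∈ J, f ≠ 0 → g.totalDegree ≤ f.totalDegree) :
    ∃ c : k, c ≠ 0 ∧ g = C c :=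
  minimal_degree_elt_is_constant_general p hp n J hroot hderiv g hgJ hg0 hgmin
end

section
/- Let M be a saturated Dieudonné complex and suppose that for some n, the quotient 𝒲₁Mⁿ := Mⁿ/(im V + im dV) is zero. Then 𝒲ᵣMⁿ := Mⁿ/(im Vʳ + im dVʳ) is zero for every r ≥ 1, and hence the inverse limit 𝒲Mⁿ = lim_r 𝒲ᵣMⁿ is zero. -/
/-- A saturated Dieudonné complex: a cochain complex of abelian groups indexed by `ℤ`,
with operators `F` (degree 0) satisfying `dF = pFd`, `p`-torsionfree, `F` injective with
image `{x : dx ∈ pM}`, together with the (unique) Verschiebung `V` satisfying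
`FV = VF = p`. -/
structure SaturatedDieudonneComplex (p : ℕ) where
  M : ℤ → Type
  inst : ∀ n, AddCommGroup (M n)
  d : ∀ n, M n →+ M (n + 1)
  F : ∀ n, M n →+ M n
  V : ∀ n, M n →+ M n
  dd : ∀ n (x : M n), d (n + 1) (d n x) = 0
  dF : ∀ n (x : M n), d n (F n x) = p • F (n + 1) (d n x)
  torsionfree : ∀ n (x : M n), p • x = 0 → x = 0
  F_injective : ∀ n, Function.Injective (F n)
  F_image : ∀ n (x : M n), (∃ w, F n w = x) ↔ ∃ y, d n x = p • y
  FV : ∀ n (x : M n), F n (V n x) = p • x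
  VF : ∀ n (x : M n), V n (F n x) = p • x

attribute [instance] SaturatedDieudonneComplex.inst

/-!
`x ↦ Fʳx` embeds `𝒲ᵣMⁿ⁺¹` into `Hⁿ⁺¹(M*/pʳM*)`: if `Fʳx = du + pʳy`, then applying `Vʳ`
and using `Vʳd = pʳdVʳ` gives `pʳx = pʳ(dVʳu + Vʳy)`, and `p`-torsionfreeness cancels `pʳ`.
For `r = 1` the embedding is onto, since `F` hits every `x` with `dx ∈ pM`, so
`𝒲₁Mⁿ⁺¹ = 0` gives `Hⁿ⁺¹(M*/pM*) = 0`. The short exact sequences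
`0 → M*/pM* → M*/pʳ⁺¹M* → M*/pʳM* → 0` then give `Hⁿ⁺¹(M*/pʳM*) = 0` for all `r` by induction.
-/

namespace SaturatedDieudonneComplex

variable {p : ℕ} (M : SaturatedDieudonneComplex p)

/-- `𝒲ᵣMᵐ⁺¹ = 0`. -/
def WVanishes (r : ℕ) (m : ℤ) : Prop :=
  ∀ x : M.M (m + 1), ∃ (y : M.M (m + 1)) (z : M.M m),
    x = (⇑(M.V (m + 1)))^[r] y + M.d m ((⇑(M.V m))^[r] z)

/-- `Hᵐ⁺¹(M*/pʳM*) = 0`, phrased with lifts to `M`. -/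
def CohomologyModPowVanishes (r : ℕ) (m : ℤ) : Prop :=
  ∀ x : M.M (m + 1), (∃ c, M.d (m + 1) x = p ^ r • c) → ∃ u y, x = M.d m u + p ^ r • y

variable {M}

lemma eq_of_pow_smul_eq {m : ℤ} {a b : M.M m} (r : ℕ) (h : p ^ r • a = p ^ r • b) :
    a = b := by
  induction r with
  | zero => simpa using h
  | succ r ih =>
    refine ih (sub_eq_zero.mp (M.torsionfree m _ ?_))
    simp only [smul_sub, smul_smul, ← pow_succ', h, sub_self]

lemma CohomologyModPowVanishes.succ {r : ℕ} {m : ℤ} (hr : M.CohomologyModPowVanishes r m)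
    (h1 : M.CohomologyModPowVanishes 1 m) : M.CohomologyModPowVanishes (r + 1) m := by
  rintro x ⟨c, hc⟩
  obtain ⟨u, y, rfl⟩ := h1 x ⟨p ^ r • c, by rw [hc, pow_one, smul_smul, ← pow_succ']⟩
  have hdy : M.d (m + 1) y = p ^ r • c := by
    refine eq_of_pow_smul_eq 1 ?_
    rw [smul_smul, ← pow_add, add_comm 1 r, ← hc, map_add, M.dd, zero_add, map_nsmul]
  obtain ⟨u', y', rfl⟩ := hr y ⟨c, hdy⟩
  refine ⟨u + p • u', y', ?_⟩
  rw [map_add, map_nsmul, smul_add, smul_smul, pow_one, ← pow_succ', add_assoc]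

variable (M)

lemma F_d_V (m : ℤ) (x : M.M m) : M.F (m + 1) (M.d m (M.V m x)) = M.d m x :=
  eq_of_pow_smul_eq 1 <| by rw [pow_one, ← M.dF, M.FV, map_nsmul]

lemma V_d (m : ℤ) (x : M.M m) : M.V (m + 1) (M.d m x) = p • M.d m (M.V m x) :=
  M.F_injective (m + 1) <| by rw [M.FV, map_nsmul, M.F_d_V]

lemma iterate_V_d (r : ℕ) (m : ℤ) (x : M.M m) :
    (⇑(M.V (m + 1)))^[r] (M.d m x) = p ^ r • M.d m ((⇑(M.V m))^[r] x) := by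
  induction r with
  | zero => simp
  | succ r ih =>
    rw [Function.iterate_succ_apply', ih, map_nsmul, M.V_d, Function.iterate_succ_apply',
      smul_smul, ← pow_succ]

lemma d_iterate_F (r : ℕ) (m : ℤ) (x : M.M m) :
    M.d m ((⇑(M.F m))^[r] x) = p ^ r • (⇑(M.F (m + 1)))^[r] (M.d m x) := by
  induction r with
  | zero => simp
  | succ r ih =>
    rw [Function.iterate_succ_apply', Function.iterate_succ_apply', M.dF, ih, map_nsmul,
      smul_smul, ← pow_succ']

lemma iterate_V_iterate_F (r : ℕ) (m : ℤ) (x : M.M m) :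
    (⇑(M.V m))^[r] ((⇑(M.F m))^[r] x) = p ^ r • x := by
  induction r generalizing x with
  | zero => simp
  | succ r ih =>
    rw [Function.iterate_succ_apply' (⇑(M.V m)), Function.iterate_succ_apply (⇑(M.F m)), ih,
      map_nsmul, M.VF, smul_smul, ← pow_succ]

lemma cohomologyModPowVanishes_zero (m : ℤ) : M.CohomologyModPowVanishes 0 m :=
  fun x _ => ⟨0, x, by simp⟩

lemma cohomologyModPowVanishes_one_of_wVanishes_one {m : ℤ} (h : M.WVanishes 1 m) :
    M.CohomologyModPowVanishes 1 m := by
  rintro x ⟨c, hc⟩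
  obtain ⟨w, rfl⟩ := (M.F_image (m + 1) x).mpr ⟨c, by rwa [pow_one] at hc⟩
  obtain ⟨y, z, rfl⟩ := h w
  refine ⟨z, y, ?_⟩
  rw [Function.iterate_one, Function.iterate_one, map_add, M.FV, M.F_d_V, pow_one]
  exact add_comm _ _

lemma cohomologyModPowVanishes_of_one {m : ℤ} (h1 : M.CohomologyModPowVanishes 1 m) (r : ℕ) :
    M.CohomologyModPowVanishes r m := by
  induction r with
  | zero => exact M.cohomologyModPowVanishes_zero m
  | succ r ih => exact ih.succ h1

lemma wVanishes_of_cohomologyModPowVanishes {r : ℕ} {m : ℤ}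
    (h : M.CohomologyModPowVanishes r m) : M.WVanishes r m := by
  intro x
  obtain ⟨u, y, hFx⟩ := h ((⇑(M.F (m + 1)))^[r] x) ⟨_, M.d_iterate_F r (m + 1) x⟩
  refine ⟨y, u, eq_of_pow_smul_eq r ?_⟩
  have hVFx := congrArg (⇑(M.V (m + 1)))^[r] hFx
  rw [M.iterate_V_iterate_F, iterate_map_add, iterate_map_nsmul, M.iterate_V_d,
    ← smul_add] at hVFx
  exact hVFx.trans (congrArg _ (add_comm _ _))

end SaturatedDieudonneComplex

theorem Wr_eq_zero_of_W1_eq_zero_general {p : ℕ} (M : SaturatedDieudonneComplex p)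
    (n : ℤ)
    (h1 : ∀ x : M.M (n + 1), ∃ (y : M.M (n + 1)) (z : M.M n),
      x = M.V (n + 1) y + M.d n (M.V n z)) :
    ∀ r : ℕ, 1 ≤ r → ∀ x : M.M (n + 1), ∃ (y : M.M (n + 1)) (z : M.M n),
      x = (⇑(M.V (n + 1)))^[r] y + M.d n ((⇑(M.V n))^[r] z) := fun r _ =>
  M.wVanishes_of_cohomologyModPowVanishes <|
    M.cohomologyModPowVanishes_of_one (M.cohomologyModPowVanishes_one_of_wVanishes_one h1) r

/-- If `M` is a saturated Dieudonné complex and `𝒲₁Mⁿ = Mⁿ/(im V + im dV)` is zero, then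
`𝒲ᵣMⁿ = Mⁿ/(im Vʳ + im dVʳ)` is zero for every `r ≥ 1` (and hence the inverse limit
`𝒲Mⁿ = lim_r 𝒲ᵣMⁿ` vanishes). -/
theorem Wr_eq_zero_of_W1_eq_zero {p : ℕ} (hp : p.Prime) (M : SaturatedDieudonneComplex p)
    (n : ℤ)
    (h1 : ∀ x : M.M (n + 1), ∃ (y : M.M (n + 1)) (z : M.M n),
      x = M.V (n + 1) y + M.d n (M.V n z)) :
    ∀ r : ℕ, 1 ≤ r → ∀ x : M.M (n + 1), ∃ (y : M.M (n + 1)) (z : M.M n),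
      x = (⇑(M.V (n + 1)))^[r] y + M.d n ((⇑(M.V n))^[r] z) :=
  Wr_eq_zero_of_W1_eq_zero_general M n h1
end
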